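/- Let G be a graph on [t] and let x = (x_1,…,x_t) be a weight assignment with x_i ≥ 0 and ∑_i x_i = 1, and set β = max_i x_i. Then p_G(x) ≤ β·d(G), where p_G(x) = 2·∑_{{i,j}∈E(G)} x_i x_j. -/

import Mathlib

open Finset
open scoped BigOperators Classical

abbrev HG := Finset (Finset ℕ)

/-- The vertex set of a hypergraph: union of its edges. -/
def hverts (G : HG) : Finset ℕ := G.sup id

/-- `G` is `r`-uniform: every edge has `r` vertices. -/
def Uniform (r : ℕ) (G : HG) : Prop := ∀ e ∈ G, e.card = r

/-- The pair `{u,v}` is covered in `G`: some edge contains both. -/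
def Covered (G : HG) (u v : ℕ) : Prop := ∃ e ∈ G, u ∈ e ∧ v ∈ e

/-- `G` contains a copy of `F`. -/
def IsCopyIn (F G : HG) : Prop :=
  ∃ φ : ℕ → ℕ, Set.InjOn φ (hverts F : Set ℕ) ∧ ∀ e ∈ F, e.image φ ∈ G

/-- The subgraph of `G` induced by `C`. -/
def induced (G : HG) (C : Finset ℕ) : HG := G.filter (fun e => e ⊆ C)

/-- `G` contains a member of the family `ℋ^F_p`: there is a core `C` of `p`
vertices such that the subgraph induced by `C` contains a copy of `F` and every
pair of vertices of `C` is covered in `G`. -/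
def ContainsHFam (F : HG) (p : ℕ) (G : HG) : Prop :=
  ∃ C : Finset ℕ, C.card = p ∧ IsCopyIn F (induced G C) ∧
    ∀ u ∈ C, ∀ v ∈ C, u ≠ v → Covered G u v

/-- Turán number: maximum number of edges of an `r`-graph on vertex set `[n]`
satisfying the "freeness" predicate `P`. -/
noncomputable def exNum (r n : ℕ) (P : HG → Prop) : ℕ :=
  sSup {m : ℕ | ∃ G : HG, Uniform r G ∧ (∀ e ∈ G, e ⊆ Finset.range n) ∧ P G ∧ G.card = m}

/-- The Lagrangian polynomial `p_G(x) = r! ∑_{e∈G} ∏_{i∈e} x_i`. -/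
noncomputable def pPoly (r : ℕ) (G : HG) (x : ℕ → ℝ) : ℝ :=
  (r.factorial : ℝ) * ∑ e ∈ G, ∏ i ∈ e, x i

/-- The Lagrangian `λ(G)`. -/
noncomputable def lagrangian (r : ℕ) (G : HG) : ℝ :=
  sSup {v : ℝ | ∃ x : ℕ → ℝ, (∀ i, 0 ≤ x i) ∧ (∑ i ∈ hverts G, x i) = 1 ∧ v = pPoly r G x}

/-- The Lagrangian density `π_λ(F)`. -/
noncomputable def piLambda (r : ℕ) (F : HG) : ℝ :=
  sSup {v : ℝ | ∃ G : HG, Uniform r G ∧ ¬ IsCopyIn F G ∧ v = lagrangian r G}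

/-- `G` is `m`-partite. -/
def MPartite (m : ℕ) (G : HG) : Prop :=
  ∃ f : ℕ → Fin m, ∀ e ∈ G, ∀ u ∈ e, ∀ v ∈ e, u ≠ v → f u ≠ f v

/-- `ℋ^F_{m+1}` is `m`-stable. -/
def MStable (r m : ℕ) (F : HG) : Prop :=
  ∀ ε : ℝ, 0 < ε → ∃ δ : ℝ, 0 < δ ∧ ∃ n₁ : ℕ, ∀ n : ℕ, n₁ ≤ n →
    ∀ G : HG, Uniform r G → (∀ e ∈ G, e ⊆ Finset.range n) →
      ¬ ContainsHFam F (m + 1) G →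
      ((m.descFactorial r : ℝ) / (m : ℝ) ^ r - δ) * (n.choose r : ℝ) < (G.card : ℝ) →
      ∃ Z : Finset ℕ, (Z.card : ℝ) ≤ ε * n ∧
        MPartite m (G.filter (fun e => Disjoint e Z))

/-- Pairs of vertices of `C` not covered in `F`. -/
def uncovPairs (F : HG) (C : Finset ℕ) : Finset (Finset ℕ) :=
  (C.powersetCard 2).filter (fun s => ¬ ∃ e ∈ F, s ⊆ e)

/-- `H` is an expanded `p`-clique with an embedded `F` (i.e. a copy of `H^F_p`). -/
def IsExpandedClique (r : ℕ) (F : HG) (p : ℕ) (H : HG) : Prop :=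
  ∃ C : Finset ℕ, hverts F ⊆ C ∧ C.card = p ∧
    ∃ B : Finset ℕ → Finset ℕ,
      (∀ s ∈ uncovPairs F C, (B s).card = r - 2 ∧ Disjoint (B s) C) ∧
      (∀ s ∈ uncovPairs F C, ∀ t ∈ uncovPairs F C, s ≠ t → Disjoint (B s) (B t)) ∧
      H = F ∪ (uncovPairs F C).image (fun s => s ∪ B s)

/-- The balanced complete `m`-partite `r`-graph `T_r(n,m)` on vertex set `[n]`,
with parts the residue classes modulo `m`. -/
def turanGraph (r n m : ℕ) : HG :=
  ((Finset.range n).powersetCard r).filter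
    (fun e => ∀ u ∈ e, ∀ v ∈ e, u ≠ v → u % m ≠ v % m)

/-- `F` has a vertex of degree 1. -/
def HasDeg1Vertex (F : HG) : Prop :=
  ∃ v ∈ hverts F, (F.filter (fun e => v ∈ e)).card = 1

/-- `T` is a tree on `k` vertices (a connected 2-graph with `k-1` edges). -/
def IsTreeGraph (T : HG) (k : ℕ) : Prop :=
  Uniform 2 T ∧ (hverts T).card = k ∧ T.card + 1 = k ∧
    ∀ u ∈ hverts T, ∀ v ∈ hverts T,
      Relation.ReflTransGen (fun a b => ({a, b} : Finset ℕ) ∈ T) u v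

/-- The `k`-vertex tree `T` satisfies the Erdős–Sós conjecture:
`ex(n,T) ≤ n(k-2)/2` for all `n`. -/
def SatisfiesES (T : HG) (k : ℕ) : Prop :=
  ∀ n : ℕ, 2 * exNum 2 n (fun G => ¬ IsCopyIn T G) ≤ n * (k - 2)

/-- The function `f_r(x) = (∏_{i=1}^{r-1} (x+i-2)) / (x+r-3)^r`. -/
noncomputable def frf (r : ℕ) (x : ℝ) : ℝ :=
  (∏ i ∈ Finset.Icc 1 (r - 1), (x + (i : ℝ) - 2)) / (x + (r : ℝ) - 3) ^ r

/-- `M` is the rightmost maximum of `f_r` on `[2,∞)`. -/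
def IsRightmostMax (r : ℕ) (M : ℝ) : Prop :=
  2 ≤ M ∧ (∀ y : ℝ, 2 ≤ y → frf r y ≤ frf r M) ∧
    (∀ y : ℝ, 2 ≤ y → frf r y = frf r M → y ≤ M)

/-- `F` is the `(r-2)`-fold enlargement of the 2-graph `T`. -/
def IsEnlargement (r : ℕ) (T F : HG) : Prop :=
  ∃ D : Finset ℕ, D.card = r - 2 ∧ Disjoint D (hverts T) ∧ F = T.image (fun e => e ∪ D)

/-- The link of a vertex `i` in `G`. -/
def link (G : HG) (i : ℕ) : HG := (G.filter (fun e => i ∈ e)).image (fun e => e.erase i)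

/-- `λ_i = ∂p_G(x)/∂x_i = r! ∑_{f ∈ L_G(i)} ∏_{j∈f} x_j`. -/
noncomputable def lamI (r : ℕ) (G : HG) (x : ℕ → ℝ) (i : ℕ) : ℝ :=
  (r.factorial : ℝ) * ∑ f ∈ link G i, ∏ j ∈ f, x j

/-- `G` is a blowup of `L`. -/
def IsBlowup (L G : HG) : Prop :=
  ∃ V : ℕ → Finset ℕ,
    (∀ i ∈ hverts L, ∀ j ∈ hverts L, i ≠ j → Disjoint (V i) (V j)) ∧
    ∀ e : Finset ℕ, e ∈ G ↔ ∃ f ∈ L, ∃ φ : ℕ → ℕ, (∀ i ∈ f, φ i ∈ V i) ∧ e = f.image φ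

/-- `G` contains an `s`-sunflower with kernel `D`. -/
def HasSunflower (G : HG) (D : Finset ℕ) (s : ℕ) : Prop :=
  ∃ S : Finset (Finset ℕ), S ⊆ G ∧ S.card = s ∧ (∀ A ∈ S, D ⊆ A) ∧
    ∀ A ∈ S, ∀ B ∈ S, A ≠ B → A ∩ B = D

/-- `F` covers pairs: every pair of vertices of `F` lies in some edge. -/
def CoversPairs (F : HG) : Prop :=
  ∀ u ∈ hverts F, ∀ v ∈ hverts F, u ≠ v → Covered F u v

/-- `d(G)`: the maximum average degree among nonempty subgraphs of `G`. -/
noncomputable def maxAvgDeg (G : HG) : ℝ :=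
  sSup {v : ℝ | ∃ H : HG, H ⊆ G ∧ H.Nonempty ∧ v = 2 * (H.card : ℝ) / ((hverts H).card : ℝ)}

/-- Symmetrizing `v` to `u`: remove all edges containing `v` and replace them
with `{D ∪ {v} : D ∈ L_G(u)}`. -/
def symmetrize (G : HG) (u v : ℕ) : HG :=
  G.filter (fun e => v ∉ e) ∪ (G.filter (fun e => u ∈ e)).image (fun e => insert v (e.erase u))

/-- The noncomplete transversals of an `m`-partite `r`-graph `L` with parts `A`. -/
noncomputable def noncompTrans (r m : ℕ) (L : HG) (A : Fin m → Finset ℕ) : Finset (Finset ℕ) :=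
  ((Finset.univ.biUnion A).powerset).filter
    (fun S => (∀ i, (S ∩ A i).card = 1) ∧ ∃ e : Finset ℕ, e ⊆ S ∧ e.card = r ∧ e ∉ L)

/-!
Since every vertex has weight at most `β`, the product `x_a x_b` of an edge is at most `β x_i`
for either endpoint `i`, so it suffices to show that `∑_e w_e ≤ (d(G)/2) ∑_i y_i` whenever each
edge weight `w_e` is below the vertex weights `y_i` of its endpoints. This is proved by peeling:
subtract the smallest vertex weight `θ` from everything and delete the minimising vertex. The
`θ`-layer contributes `θ |E(G)| ≤ θ (d(G)/2) |V(G)|`, and the remaining weights live on a graph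
with fewer edges.
-/

lemma mem_hverts {G : HG} {i : ℕ} : i ∈ hverts G ↔ ∃ e ∈ G, i ∈ e := by
  simp [hverts, Finset.mem_sup]

lemma hverts_mono {H G : HG} (h : H ⊆ G) : hverts H ⊆ hverts G :=
  Finset.sup_mono h

@[simp]
lemma hverts_empty : hverts ∅ = ∅ := rfl

theorem sum_le_mul_sum_hverts_of_card_le {D : ℝ} {G : HG} {x : ℕ → ℝ} {w : Finset ℕ → ℝ}
    (hD : ∀ H ⊆ G, (H.card : ℝ) ≤ D * (hverts H).card) (hx : ∀ i ∈ hverts G, 0 ≤ x i)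
    (hw : ∀ e ∈ G, ∀ i ∈ e, w e ≤ x i) :
    ∑ e ∈ G, w e ≤ D * ∑ i ∈ hverts G, x i := by
  induction G using Finset.strongInduction generalizing x w with
  | H G ih =>
  rcases G.eq_empty_or_nonempty with rfl | hGne
  · simp
  have hGD : (G.card : ℝ) ≤ D * (hverts G).card := hD G subset_rfl
  have hVpos : 0 < D * (hverts G).card :=
    lt_of_lt_of_le (by exact_mod_cast hGne.card_pos) hGD
  have hD0 : 0 ≤ D := (pos_of_mul_pos_left hVpos (by positivity)).le
  have hVne : (hverts G).Nonempty :=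
    Finset.card_pos.1 (by exact_mod_cast pos_of_mul_pos_right hVpos hD0)
  obtain ⟨v, hv, hvmin⟩ := (hverts G).exists_min_image x hVne
  set θ := x v
  set G' := G.filter (fun e => v ∉ e)
  have hG'G : G' ⊂ G := by
    obtain ⟨e, he, hve⟩ := mem_hverts.1 hv
    exact Finset.filter_ssubset.2 ⟨e, he, not_not.2 hve⟩
  have hV' : hverts G' ⊆ hverts G := hverts_mono hG'G.subset
  have hpeeled : ∑ e ∈ G', (w e - θ) ≤ D * ∑ i ∈ hverts G', (x i - θ) :=
    ih G' hG'G (x := fun i => x i - θ) (w := fun e => w e - θ)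
      (fun H hH => hD H (hH.trans hG'G.subset))
      (fun i hi => sub_nonneg.2 (hvmin i (hV' hi)))
      (fun e he i hi => sub_le_sub_right (hw e (hG'G.subset he) i hi) θ)
  have hthrough : ∑ e ∈ G with ¬ v ∉ e, (w e - θ) ≤ 0 :=
    Finset.sum_nonpos fun e he => by
      rw [Finset.mem_filter, not_not] at he
      exact sub_nonpos.2 (hw e he.1 v he.2)
  have hshrink : ∑ i ∈ hverts G', (x i - θ) ≤ ∑ i ∈ hverts G, (x i - θ) :=
    Finset.sum_le_sum_of_subset_of_nonneg hV' fun i hi _ => sub_nonneg.2 (hvmin i hi)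
  have hθ : θ * G.card ≤ θ * (D * (hverts G).card) :=
    mul_le_mul_of_nonneg_left hGD (hx v hv)
  calc ∑ e ∈ G, w e = ∑ e ∈ G, (w e - θ) + θ * G.card := by
        simp only [Finset.sum_sub_distrib, Finset.sum_const, nsmul_eq_mul]; ring
    _ = ∑ e ∈ G', (w e - θ) + ∑ e ∈ G with ¬ v ∉ e, (w e - θ) + θ * G.card := by
        rw [Finset.sum_filter_add_sum_filter_not]
    _ ≤ D * ∑ i ∈ hverts G, (x i - θ) + θ * (D * (hverts G).card) := by
        linarith [mul_le_mul_of_nonneg_left hshrink hD0]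
    _ = D * ∑ i ∈ hverts G, x i := by
        simp only [Finset.sum_sub_distrib, Finset.sum_const, nsmul_eq_mul]; ring

lemma prod_le_pow_mul_of_mem {ι : Type*} [DecidableEq ι] {e : Finset ι} {x : ι → ℝ} {β : ℝ}
    {i : ι} (hi : i ∈ e) (hx0 : ∀ j ∈ e, 0 ≤ x j) (hxβ : ∀ j ∈ e, x j ≤ β) :
    ∏ j ∈ e, x j ≤ β ^ (e.card - 1) * x i := by
  rw [← Finset.mul_prod_erase e x hi, ← Finset.card_erase_of_mem hi, mul_comm]
  gcongr
  · exact hx0 i hi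
  · calc ∏ j ∈ e.erase i, x j ≤ ∏ _j ∈ e.erase i, β :=
          Finset.prod_le_prod (fun j hj => hx0 j (Finset.mem_of_mem_erase hj))
            (fun j hj => hxβ j (Finset.mem_of_mem_erase hj))
      _ = β ^ (e.erase i).card := Finset.prod_const β

lemma maxAvgDeg_nonneg (G : HG) : 0 ≤ maxAvgDeg G :=
  Real.sSup_nonneg fun _ ⟨_, _, _, hv⟩ => hv ▸ by positivity

lemma div_card_hverts_le_maxAvgDeg {G H : HG} (hH : H ⊆ G) (hne : H.Nonempty) :
    2 * (H.card : ℝ) / (hverts H).card ≤ maxAvgDeg G := by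
  refine le_csSup ?_ ⟨H, hH, hne, rfl⟩
  refine ((G.powerset.finite_toSet.image
    fun H : HG => 2 * (H.card : ℝ) / (hverts H).card).subset ?_).bddAbove
  rintro _ ⟨H, hH, -, rfl⟩
  exact ⟨H, Finset.mem_powerset.2 hH, rfl⟩

lemma card_le_half_maxAvgDeg_mul {G H : HG} (hG : ∀ e ∈ G, e.Nonempty) (hH : H ⊆ G) :
    (H.card : ℝ) ≤ maxAvgDeg G / 2 * (hverts H).card := by
  rcases H.eq_empty_or_nonempty with rfl | hne
  · simp
  obtain ⟨e, he⟩ := hne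
  obtain ⟨i, hi⟩ := hG e (hH he)
  have hV : (0 : ℝ) < (hverts H).card := by
    exact_mod_cast Finset.card_pos.2 ⟨i, mem_hverts.2 ⟨e, he, hi⟩⟩
  have := div_card_hverts_le_maxAvgDeg hH ⟨e, he⟩
  rw [div_le_iff₀ hV] at this
  linarith

/-- `p_G(x) ≤ β·d(G)` where `β = max_i x_i`. -/
theorem stmt_16 (t : ℕ) (G : HG) (hG : Uniform 2 G) (hGt : ∀ e ∈ G, e ⊆ Finset.range t)
    (x : ℕ → ℝ) (hx0 : ∀ i, 0 ≤ x i) (hx1 : (∑ i ∈ Finset.range t, x i) = 1)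
    (β : ℝ) (hβmem : ∃ i ∈ Finset.range t, x i = β)
    (hβub : ∀ i ∈ Finset.range t, x i ≤ β) :
    pPoly 2 G x ≤ β * maxAvgDeg G := by
  obtain ⟨i₀, -, rfl⟩ := hβmem
  have hVt : hverts G ⊆ Finset.range t := Finset.sup_le hGt
  have hedge : ∀ e ∈ G, ∀ i ∈ e, ∏ j ∈ e, x j ≤ x i₀ * x i := fun e he i hi => by
    simpa [hG e he] using
      prod_le_pow_mul_of_mem hi (fun j _ => hx0 j) (fun j hj => hβub j (hGt e he hj))
  have hsum := sum_le_mul_sum_hverts_of_card_le (D := maxAvgDeg G / 2)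
    (x := fun i => x i₀ * x i)
    (fun H hH => card_le_half_maxAvgDeg_mul
      (fun e he => Finset.card_pos.1 (by rw [hG e he]; norm_num)) hH)
    (fun i _ => mul_nonneg (hx0 i₀) (hx0 i)) hedge
  have hmass : ∑ i ∈ hverts G, x i ≤ 1 :=
    hx1 ▸ Finset.sum_le_sum_of_subset_of_nonneg hVt fun i _ _ => hx0 i
  rw [← Finset.mul_sum] at hsum
  calc pPoly 2 G x = 2 * ∑ e ∈ G, ∏ j ∈ e, x j := by simp [pPoly, Nat.factorial]
    _ ≤ x i₀ * maxAvgDeg G * ∑ i ∈ hverts G, x i := by linarith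
    _ ≤ x i₀ * maxAvgDeg G :=
      mul_le_of_le_one_right (mul_nonneg (hx0 i₀) (maxAvgDeg_nonneg G)) hmass
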